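/- Let J ⊆ ℝ be an open interval, κ : J → ℝ smooth, and F₊, F₋ : J → M₂(ℝ) smooth maps with det F₊(s) = det F₋(s) = 1 for all s, satisfying the spinorial Frenet-type equations F₊' = F₊·[[0, κ+1],[1, 0]] and F₋' = F₋·[[0, κ−1],[1, 0]]. Then γ := F₊·F₋⁻¹ is a null curve in AdS parameterized by proper time with bending κ: det γ(s) = 1, ⟨γ'(s),γ'(s)⟩ = 0, ⟨γ''(s),γ''(s)⟩ = 4, and −(1/16)⟨γ'''(s),γ'''(s)⟩ = κ(s) for all s ∈ J. Moreover, the first column vectors η₊ of F₊ and η₋ of F₋ satisfy det(η±, η±') = 1 and η±'' = (κ ± 1)·η±, i.e. they form a pair of star-shaped cousins with central affine curvatures k₊ = κ+1 and k₋ = κ−1. -/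

import Mathlib

noncomputable section

open Matrix Set

attribute [local instance] Matrix.normedAddCommGroup Matrix.normedSpace

/-- The space of 2×2 real matrices. -/
abbrev M2 : Type := Matrix (Fin 2) (Fin 2) ℝ

/-- The symmetric bilinear form of signature (−,−,+,+) on `M₂(ℝ)`, with `⟨X,X⟩ = -det X`. -/
def ip (X Y : M2) : ℝ :=
  (1 / 2) * (X 0 1 * Y 1 0 + X 1 0 * Y 0 1 - X 0 0 * Y 1 1 - X 1 1 * Y 0 0)

/-- First derivative. -/
def d1 (γ : ℝ → M2) : ℝ → M2 := deriv γ
/-- Second derivative. -/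
def d2 (γ : ℝ → M2) : ℝ → M2 := deriv (deriv γ)
/-- Third derivative. -/
def d3 (γ : ℝ → M2) : ℝ → M2 := deriv (deriv (deriv γ))

/-- The bending of a null curve parameterized by proper time. -/
def bending (γ : ℝ → M2) (s : ℝ) : ℝ := -(1 / 16) * ip (d3 γ s) (d3 γ s)

/-- `det2 u v` is the determinant of the 2×2 matrix with columns `u` and `v`. -/
def det2 (u v : ℝ × ℝ) : ℝ := u.1 * v.2 - u.2 * v.1

/-- The curve `γ = F₊·F₋⁻¹` obtained from a pair of frames. -/
def gam (Fp Fm : ℝ → M2) : ℝ → M2 := fun s => Fp s * (Fm s)⁻¹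

/-- The first column vector of a matrix-valued curve. -/
def col1 (F : ℝ → M2) (s : ℝ) : ℝ × ℝ := (F s 0 0, F s 1 0)

lemma hasDerivAt_entry {F : ℝ → M2} {F' : M2} {s : ℝ} (h : HasDerivAt F F' s) (i j : Fin 2) :
    HasDerivAt (fun t => F t i j) (F' i j) s := by
  have h1 := hasDerivAt_pi.1 h i
  exact hasDerivAt_pi.1 h1 j

lemma hasDerivAt_of_entries {F : ℝ → M2} {F' : M2} {s : ℝ}
    (h : ∀ i j, HasDerivAt (fun t => F t i j) (F' i j) s) : HasDerivAt F F' s :=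
  hasDerivAt_pi.2 fun i => hasDerivAt_pi.2 fun j => h i j

/-- If `F₊, F₋ : J → SL(2,ℝ)` solve the spinorial Frenet-type equations
`F₊' = F₊·[[0,κ+1],[1,0]]` and `F₋' = F₋·[[0,κ−1],[1,0]]`, then `γ = F₊·F₋⁻¹` is a null
curve in AdS parameterized by proper time with bending `κ`, and the first columns
`η₊, η₋` of `F₊, F₋` form a pair of star-shaped cousins: `det(η±, η±') = 1` and
`η±'' = (κ ± 1)·η±`, i.e. their central affine curvatures are `κ+1` and `κ−1`. -/
theorem stmt5 (J : Set ℝ) (hJopen : IsOpen J) (hJint : J.OrdConnected)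
    (κ : ℝ → ℝ) (hκ : ContDiffOn ℝ (⊤ : ℕ∞) κ J)
    (Fp Fm : ℝ → M2) (hFp : ContDiffOn ℝ (⊤ : ℕ∞) Fp J) (hFm : ContDiffOn ℝ (⊤ : ℕ∞) Fm J)
    (hdetp : ∀ s ∈ J, (Fp s).det = 1) (hdetm : ∀ s ∈ J, (Fm s).det = 1)
    (hodep : ∀ s ∈ J, deriv Fp s = Fp s * !![0, κ s + 1; 1, 0])
    (hodem : ∀ s ∈ J, deriv Fm s = Fm s * !![0, κ s - 1; 1, 0]) :
    ∀ s ∈ J,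
      (gam Fp Fm s).det = 1 ∧
      ip (d1 (gam Fp Fm) s) (d1 (gam Fp Fm) s) = 0 ∧
      ip (d2 (gam Fp Fm) s) (d2 (gam Fp Fm) s) = 4 ∧
      bending (gam Fp Fm) s = κ s ∧
      det2 (col1 Fp s) (deriv (col1 Fp) s) = 1 ∧
      det2 (col1 Fm s) (deriv (col1 Fm) s) = 1 ∧
      deriv (deriv (col1 Fp)) s = (κ s + 1) • col1 Fp s ∧
      deriv (deriv (col1 Fm)) s = (κ s - 1) • col1 Fm s := by
  -- matrix-level derivatives from the ODEs
  have hPd : ∀ t ∈ J, HasDerivAt Fp (Fp t * !![0, κ t + 1; 1, 0]) t := by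
    intro t ht
    have h := ((hFp.contDiffAt (hJopen.mem_nhds ht)).differentiableAt (by simp)).hasDerivAt
    erw [hodep t ht] at h; exact h
  have hMd : ∀ t ∈ J, HasDerivAt Fm (Fm t * !![0, κ t - 1; 1, 0]) t := by
    intro t ht
    have h := ((hFm.contDiffAt (hJopen.mem_nhds ht)).differentiableAt (by simp)).hasDerivAt
    erw [hodem t ht] at h; exact h
  -- entrywise derivatives
  have hp0 : ∀ t ∈ J, ∀ i : Fin 2, HasDerivAt (fun u => Fp u i 0) (Fp t i 1) t := by
    intro t ht i
    have h := hasDerivAt_entry (hPd t ht) i 0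
    simpa [Matrix.mul_apply, Fin.sum_univ_two] using h
  have hp1 : ∀ t ∈ J, ∀ i : Fin 2, HasDerivAt (fun u => Fp u i 1) ((κ t + 1) * Fp t i 0) t := by
    intro t ht i
    have h := hasDerivAt_entry (hPd t ht) i 1
    simpa [Matrix.mul_apply, Fin.sum_univ_two, mul_comm] using h
  have hm0 : ∀ t ∈ J, ∀ i : Fin 2, HasDerivAt (fun u => Fm u i 0) (Fm t i 1) t := by
    intro t ht i
    have h := hasDerivAt_entry (hMd t ht) i 0
    simpa [Matrix.mul_apply, Fin.sum_univ_two] using h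
  have hm1 : ∀ t ∈ J, ∀ i : Fin 2, HasDerivAt (fun u => Fm u i 1) ((κ t - 1) * Fm t i 0) t := by
    intro t ht i
    have h := hasDerivAt_entry (hMd t ht) i 1
    simpa [Matrix.mul_apply, Fin.sum_univ_two, mul_comm] using h
  -- explicit formula for γ on J and its successive derivatives
  set g : ℝ → M2 := fun u => Matrix.of fun i =>
    ![Fp u i 0 * Fm u 1 1 - Fp u i 1 * Fm u 1 0,
      Fp u i 1 * Fm u 0 0 - Fp u i 0 * Fm u 0 1] with hg
  set g1 : ℝ → M2 := fun u => Matrix.of fun i =>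
    ![-2 * Fp u i 0 * Fm u 1 0, 2 * Fp u i 0 * Fm u 0 0] with hg1
  set g2 : ℝ → M2 := fun u => Matrix.of fun i =>
    ![-2 * Fp u i 0 * Fm u 1 1 - 2 * Fp u i 1 * Fm u 1 0,
      2 * Fp u i 0 * Fm u 0 1 + 2 * Fp u i 1 * Fm u 0 0] with hg2
  set g3 : ℝ → M2 := fun u => Matrix.of fun i =>
    ![-4 * Fp u i 1 * Fm u 1 1 - 4 * κ u * Fp u i 0 * Fm u 1 0,
      4 * Fp u i 1 * Fm u 0 1 + 4 * κ u * Fp u i 0 * Fm u 0 0] with hg3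
  have hgamJ : ∀ t ∈ J, gam Fp Fm t = g t := by
    intro t ht
    have hinv : (Fm t)⁻¹ = (Fm t).adjugate := by
      rw [Matrix.inv_def, hdetm t ht, Ring.inverse_one, one_smul]
    rw [gam, hinv, Matrix.adjugate_fin_two (Fm t)]
    ext i j
    fin_cases j <;>
      simp [hg, Matrix.mul_apply, Fin.sum_univ_two] <;> ring
  -- first derivative of γ on J
  have hgd : ∀ t ∈ J, HasDerivAt g (g1 t) t := by
    intro t ht
    apply hasDerivAt_of_entries
    intro i j
    fin_cases j <;> simp only [hg, hg1, Matrix.of_apply, Matrix.cons_val_zero,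
      Matrix.cons_val_one, Matrix.head_cons, Fin.zero_eta, Fin.mk_one]
    · have h := ((hp0 t ht i).mul (hm1 t ht 1)).sub ((hp1 t ht i).mul (hm0 t ht 1))
      convert h using 1
      · rfl
      · rfl
      · rfl
      ring
    · have h := ((hp1 t ht i).mul (hm0 t ht 0)).sub ((hp0 t ht i).mul (hm1 t ht 0))
      convert h using 1
      · rfl
      · rfl
      · rfl
      ring
  have hd1 : ∀ t ∈ J, deriv (gam Fp Fm) t = g1 t := by
    intro t ht
    have hev : gam Fp Fm =ᶠ[nhds t] g :=
      Filter.eventuallyEq_of_mem (hJopen.mem_nhds ht) fun u hu => hgamJ u hu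
    erw [hev.deriv_eq, (hgd t ht).deriv]
  -- second derivative
  have hg1d : ∀ t ∈ J, HasDerivAt g1 (g2 t) t := by
    intro t ht
    apply hasDerivAt_of_entries
    intro i j
    fin_cases j <;> simp only [hg1, hg2, Matrix.of_apply, Matrix.cons_val_zero,
      Matrix.cons_val_one, Matrix.head_cons, Fin.zero_eta, Fin.mk_one]
    · have h := ((hp0 t ht i).const_mul (-2 : ℝ)).mul (hm0 t ht 1)
      convert h using 1
      · rfl
      · rfl
      · rfl
      ring
    · have h := ((hp0 t ht i).const_mul (2 : ℝ)).mul (hm0 t ht 0)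
      convert h using 1
      · rfl
      · rfl
      · rfl
      ring
  have hd2 : ∀ t ∈ J, deriv (deriv (gam Fp Fm)) t = g2 t := by
    intro t ht
    have hev : deriv (gam Fp Fm) =ᶠ[nhds t] g1 :=
      Filter.eventuallyEq_of_mem (hJopen.mem_nhds ht) fun u hu => hd1 u hu
    erw [hev.deriv_eq, (hg1d t ht).deriv]
  -- third derivative
  have hg2d : ∀ t ∈ J, HasDerivAt g2 (g3 t) t := by
    intro t ht
    apply hasDerivAt_of_entries
    intro i j
    fin_cases j <;> simp only [hg2, hg3, Matrix.of_apply, Matrix.cons_val_zero,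
      Matrix.cons_val_one, Matrix.head_cons, Fin.zero_eta, Fin.mk_one]
    · have h := (((hp0 t ht i).const_mul (-2 : ℝ)).mul (hm1 t ht 1)).sub
        (((hp1 t ht i).const_mul (2 : ℝ)).mul (hm0 t ht 1))
      convert h using 1
      · rfl
      · rfl
      · rfl
      ring
    · have h := (((hp0 t ht i).const_mul (2 : ℝ)).mul (hm1 t ht 0)).add
        (((hp1 t ht i).const_mul (2 : ℝ)).mul (hm0 t ht 0))
      convert h using 1
      · rfl
      · rfl
      · rfl
      ring
  have hd3 : ∀ t ∈ J, deriv (deriv (deriv (gam Fp Fm))) t = g3 t := by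
    intro t ht
    have hev : deriv (deriv (gam Fp Fm)) =ᶠ[nhds t] g2 :=
      Filter.eventuallyEq_of_mem (hJopen.mem_nhds ht) fun u hu => hd2 u hu
    erw [hev.deriv_eq, (hg2d t ht).deriv]
  -- the columns
  have hc1p : ∀ t ∈ J, deriv (col1 Fp) t = (Fp t 0 1, Fp t 1 1) := by
    intro t ht
    exact (HasDerivAt.prodMk (hp0 t ht 0) (hp0 t ht 1)).deriv
  have hc1m : ∀ t ∈ J, deriv (col1 Fm) t = (Fm t 0 1, Fm t 1 1) := by
    intro t ht
    exact (HasDerivAt.prodMk (hm0 t ht 0) (hm0 t ht 1)).deriv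
  -- now the conclusions
  intro s hs
  have hdp : Fp s 0 0 * Fp s 1 1 - Fp s 0 1 * Fp s 1 0 = 1 := by
    have := hdetp s hs; rwa [Matrix.det_fin_two] at this
  have hdm : Fm s 0 0 * Fm s 1 1 - Fm s 0 1 * Fm s 1 0 = 1 := by
    have := hdetm s hs; rwa [Matrix.det_fin_two] at this
  refine ⟨?_, ?_, ?_, ?_, ?_, ?_, ?_, ?_⟩
  · rw [hgamJ s hs, Matrix.det_fin_two]
    simp only [hg, Matrix.of_apply, Matrix.cons_val_zero, Matrix.cons_val_one, Matrix.head_cons, Fin.zero_eta, Fin.mk_one]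
    linear_combination (Fm s 0 0 * Fm s 1 1 - Fm s 0 1 * Fm s 1 0) * hdp + hdm
  · rw [show d1 (gam Fp Fm) s = g1 s from hd1 s hs]
    simp only [ip, hg1, Matrix.of_apply, Matrix.cons_val_zero, Matrix.cons_val_one,
      Matrix.head_cons, Fin.zero_eta, Fin.mk_one]
    ring
  · rw [show d2 (gam Fp Fm) s = g2 s from hd2 s hs]
    simp only [ip, hg2, Matrix.of_apply, Matrix.cons_val_zero, Matrix.cons_val_one,
      Matrix.head_cons, Fin.zero_eta, Fin.mk_one]
    linear_combination (4 * (Fm s 0 0 * Fm s 1 1 - Fm s 0 1 * Fm s 1 0)) * hdp + 4 * hdm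
  · rw [bending, show d3 (gam Fp Fm) s = g3 s from hd3 s hs]
    simp only [ip, hg3, Matrix.of_apply, Matrix.cons_val_zero, Matrix.cons_val_one,
      Matrix.head_cons, Fin.zero_eta, Fin.mk_one]
    linear_combination (κ s * (Fm s 0 0 * Fm s 1 1 - Fm s 0 1 * Fm s 1 0)) * hdp
      + κ s * hdm
  · rw [hc1p s hs]
    simp only [det2, col1]
    linear_combination hdp
  · rw [hc1m s hs]
    simp only [det2, col1]
    linear_combination hdm
  · have hev : deriv (col1 Fp) =ᶠ[nhds s] fun u => (Fp u 0 1, Fp u 1 1) :=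
      Filter.eventuallyEq_of_mem (hJopen.mem_nhds hs) fun u hu => hc1p u hu
    rw [hev.deriv_eq, (HasDerivAt.prodMk (hp1 s hs 0) (hp1 s hs 1)).deriv]
    simp [col1, Prod.smul_mk, smul_eq_mul]
  · have hev : deriv (col1 Fm) =ᶠ[nhds s] fun u => (Fm u 0 1, Fm u 1 1) :=
      Filter.eventuallyEq_of_mem (hJopen.mem_nhds hs) fun u hu => hc1m u hu
    rw [hev.deriv_eq, (HasDerivAt.prodMk (hm1 s hs 0) (hm1 s hs 1)).deriv]
    simp [col1, Prod.smul_mk, smul_eq_mul]
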